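/- arXiv:1908.00291 — 3 statements merged into one kernel-verified Lean document; each statement's English description precedes it below -/
import Mathlib

section
/- Let 0 < p < ∞ and let v be an admissible weight function, and let 𝒯 = {T_t : t ≥ 0} be the semigroup of left translation operators on X = L^p_v(ℝ₊). If f ∈ X with f ≠ 0 is a recurrent point of 𝒯, i.e., there exists a sequence t_1 < t_2 < t_3 < ⋯ with t_k → ∞ and ‖T_{t_k} f − f‖ → 0, then there exists a > 0 such that ‖(T_t f)·χ_{[0,a]}‖ does not converge to 0 as t → ∞. -/
open MeasureTheory Filter Set
open scoped ENNReal

/-- The `L^p_v` norm of a function on `[0,∞)`: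
`‖f‖ = (∫₀^∞ |f(x)|^p v(x) dx)^(1/p)`. -/
noncomputable def lpNorm (p : ℝ) (v : ℝ → ℝ) (f : ℝ → ℝ) : ℝ :=
  (∫ x in Set.Ici (0:ℝ), |f x| ^ p * v x) ^ (1 / p)

/-- Membership in the weighted Lebesgue space `L^p_v(ℝ₊)`. -/
def MemLpW (p : ℝ) (v : ℝ → ℝ) (f : ℝ → ℝ) : Prop :=
  AEStronglyMeasurable f (volume.restrict (Set.Ici (0:ℝ))) ∧
    IntegrableOn (fun x => |f x| ^ p * v x) (Set.Ici (0:ℝ))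

/-- The left translation operator `(T_t f)(x) = f (x + t)`. -/
def translateW (t : ℝ) (f : ℝ → ℝ) : ℝ → ℝ := fun x => f (x + t)

/-- `v` is an admissible weight function: strictly positive, locally integrable on `[0,∞)`,
and there are `M ≥ 1`, `w ≥ 0` with `v x ≤ M * exp (w*t) * v (x+t)` for all `x, t ≥ 0`. -/
def AdmissibleWeight (v : ℝ → ℝ) : Prop :=
  (∀ x, 0 ≤ x → 0 < v x) ∧
  (∀ a, 0 ≤ a → IntegrableOn v (Set.Icc (0:ℝ) a)) ∧
  ∃ M, 1 ≤ M ∧ ∃ w, 0 ≤ w ∧ ∀ x, 0 ≤ x → ∀ t, 0 ≤ t →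
    v x ≤ M * Real.exp (w * t) * v (x + t)

/-- The set `{ v x / v y : 0 ≤ x ≤ y }`. -/
def ratioSet (v : ℝ → ℝ) : Set ℝ := {r | ∃ x y, 0 ≤ x ∧ x ≤ y ∧ r = v x / v y}

/-!
If every window `∫₀^a |f(x+t)|^p v(x) dx` tended to `0`, then along the recurrence times `t_k`
the quasi-triangle inequality `|f|^p ≤ 2^p (|T_{t_k} f - f|^p + |T_{t_k} f|^p)` would force
`∫₀^a |f|^p v = 0` for every `a`, hence `‖f‖ = 0`. Admissibility of `v` is what keeps the
translates `T_t f` in `L^p_v`, so that all these integrals are genuine rather than junk zeros.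
-/

lemma add_rpow_le_two_rpow_mul {p a b : ℝ} (hp : 0 ≤ p) (ha : 0 ≤ a) (hb : 0 ≤ b) :
    (a + b) ^ p ≤ 2 ^ p * (a ^ p + b ^ p) := by
  have hmax : (max a b) ^ p ≤ a ^ p + b ^ p := by
    rcases le_total a b with h | h
    · rw [max_eq_right h]; linarith [Real.rpow_nonneg ha p]
    · rw [max_eq_left h]; linarith [Real.rpow_nonneg hb p]
  calc (a + b) ^ p ≤ (2 * max a b) ^ p :=
        Real.rpow_le_rpow (by positivity) (by linarith [le_max_left a b, le_max_right a b]) hp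
    _ = 2 ^ p * (max a b) ^ p := Real.mul_rpow zero_le_two (le_max_of_le_left ha)
    _ ≤ 2 ^ p * (a ^ p + b ^ p) := by gcongr

lemma abs_rpow_le_two_rpow_mul {p : ℝ} (hp : 0 ≤ p) (a b : ℝ) :
    |b| ^ p ≤ 2 ^ p * (|a - b| ^ p + |a| ^ p) := by
  have hb : |b| ≤ |a - b| + |a| := by
    linarith [abs_sub_abs_le_abs_sub b a, abs_sub_comm a b]
  exact (Real.rpow_le_rpow (abs_nonneg b) hb hp).trans
    (add_rpow_le_two_rpow_mul hp (abs_nonneg _) (abs_nonneg _))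

lemma abs_sub_rpow_le_two_rpow_mul {p : ℝ} (hp : 0 ≤ p) (a b : ℝ) :
    |a - b| ^ p ≤ 2 ^ p * (|a| ^ p + |b| ^ p) :=
  (Real.rpow_le_rpow (abs_nonneg _) (abs_sub a b) hp).trans
    (add_rpow_le_two_rpow_mul hp (abs_nonneg _) (abs_nonneg _))

lemma tendsto_nhds_zero_of_tendsto_rpow_one_div {ι : Type*} {l : Filter ι} {g : ι → ℝ}
    {p : ℝ} (hp : 0 < p) (hg : ∀ i, 0 ≤ g i)
    (h : Tendsto (fun i => g i ^ (1 / p)) l (nhds 0)) :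
    Tendsto g l (nhds 0) := by
  have hpow := ((Real.continuous_rpow_const hp.le).tendsto 0).comp h
  rw [Real.zero_rpow hp.ne'] at hpow
  refine hpow.congr fun i => ?_
  simp only [Function.comp_apply, ← Real.rpow_mul (hg i), one_div_mul_cancel hp.ne',
    Real.rpow_one]

lemma setIntegral_Ici_eq_zero_of_forall_Icc {h : ℝ → ℝ} (hh : IntegrableOn h (Ici 0))
    (hwin : ∀ a, 0 < a → ∫ x in Icc 0 a, h x = 0) : ∫ x in Ici 0, h x = 0 := by
  have hlim := intervalIntegral_tendsto_integral_Ioi 0 (hh.mono_set Ioi_subset_Ici_self)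
    (tendsto_natCast_atTop_atTop.comp (tendsto_add_atTop_nat 1))
  rw [integral_Ici_eq_integral_Ioi]
  refine tendsto_nhds_unique hlim (tendsto_const_nhds.congr fun n => ?_)
  rw [Function.comp_apply, intervalIntegral.integral_of_le (by positivity),
    ← integral_Icc_eq_integral_Ioc, hwin _ (by positivity)]

lemma measurePreserving_add_right_restrict_Ici (t : ℝ) :
    MeasurePreserving (· + t) (volume.restrict (Ici 0)) (volume.restrict (Ici t)) := by
  simpa using
    (measurePreserving_add_right volume t).restrict_preimage (measurableSet_Ici (a := t))

lemma MeasureTheory.AEStronglyMeasurable.comp_add_right_Ici {g : ℝ → ℝ}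
    (hg : AEStronglyMeasurable g (volume.restrict (Ici 0))) {t : ℝ} (ht : 0 ≤ t) :
    AEStronglyMeasurable (fun x => g (x + t)) (volume.restrict (Ici 0)) :=
  (hg.mono_measure (Measure.restrict_mono (Ici_subset_Ici.2 ht) le_rfl)).comp_measurePreserving
    (measurePreserving_add_right_restrict_Ici t)

lemma MeasureTheory.IntegrableOn.comp_add_right_Ici {g : ℝ → ℝ} (hg : IntegrableOn g (Ici 0))
    {t : ℝ} (ht : 0 ≤ t) : IntegrableOn (fun x => g (x + t)) (Ici 0) :=
  ((measurePreserving_add_right_restrict_Ici t).integrable_comp_emb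
    (MeasurableEquiv.addRight t).measurableEmbedding).2 (hg.mono_set (Ici_subset_Ici.2 ht))

lemma MeasureTheory.AEStronglyMeasurable.abs_rpow_mul {μ : Measure ℝ} {p : ℝ}
    {g v : ℝ → ℝ} (hg : AEStronglyMeasurable g μ) (hv : AEStronglyMeasurable v μ) :
    AEStronglyMeasurable (fun x => |g x| ^ p * v x) μ :=
  ((hg.aemeasurable.abs.pow_const p).mul hv.aemeasurable).aestronglyMeasurable

lemma setIntegral_abs_rpow_mul_nonneg {p : ℝ} {g v : ℝ → ℝ}
    (hv : ∀ x, 0 ≤ x → 0 ≤ v x) {s : Set ℝ} (hs : MeasurableSet s) (hs0 : s ⊆ Ici 0) :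
    0 ≤ ∫ x in s, |g x| ^ p * v x :=
  setIntegral_nonneg hs fun x hx => mul_nonneg (by positivity) (hv x (hs0 hx))

lemma AdmissibleWeight.nonneg {v : ℝ → ℝ} (hv : AdmissibleWeight v) :
    ∀ x, 0 ≤ x → 0 ≤ v x :=
  fun x hx => (hv.1 x hx).le

lemma AdmissibleWeight.aestronglyMeasurable {v : ℝ → ℝ} (hv : AdmissibleWeight v) :
    AEStronglyMeasurable v (volume.restrict (Ici 0)) := by
  have hcover : (⋃ n : ℕ, Icc (0:ℝ) n) = Ici 0 :=
    iUnion_Icc_eq_Ici_self_iff.2 fun x _ => exists_nat_ge x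
  rw [← hcover]
  exact aestronglyMeasurable_iUnion_iff.2 fun n => (hv.2.1 n n.cast_nonneg).aestronglyMeasurable

section MemLpW

variable {p : ℝ} {v f g : ℝ → ℝ}

lemma MemLpW.translate (hv : AdmissibleWeight v) (hf : MemLpW p v f) {t : ℝ} (ht : 0 ≤ t) :
    MemLpW p v (translateW t f) := by
  obtain ⟨hfm, hfi⟩ := hf
  obtain ⟨M, -, w, -, hvM⟩ := hv.2.2
  have hfm : AEStronglyMeasurable (translateW t f) (volume.restrict (Ici 0)) :=
    hfm.comp_add_right_Ici ht
  refine ⟨hfm, Integrable.mono' ((hfi.comp_add_right_Ici ht).const_mul (M * Real.exp (w * t)))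
    (hfm.abs_rpow_mul hv.aestronglyMeasurable) ?_⟩
  filter_upwards [ae_restrict_mem measurableSet_Ici] with x hx
  rw [Real.norm_of_nonneg (mul_nonneg (by positivity) (hv.nonneg x hx))]
  calc |f (x + t)| ^ p * v x ≤ |f (x + t)| ^ p * (M * Real.exp (w * t) * v (x + t)) :=
        mul_le_mul_of_nonneg_left (hvM x hx t ht) (by positivity)
    _ = M * Real.exp (w * t) * (|f (x + t)| ^ p * v (x + t)) := by ring

lemma MemLpW.sub (hp : 0 ≤ p) (hv : AdmissibleWeight v) (hf : MemLpW p v f)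
    (hg : MemLpW p v g) : MemLpW p v (f - g) := by
  obtain ⟨hfm, hfi⟩ := hf
  obtain ⟨hgm, hgi⟩ := hg
  refine ⟨hfm.sub hgm, Integrable.mono' ((hfi.add hgi).const_mul (2 ^ p))
    ((hfm.sub hgm).abs_rpow_mul hv.aestronglyMeasurable) ?_⟩
  filter_upwards [ae_restrict_mem measurableSet_Ici] with x hx
  simp only [Pi.add_apply, Pi.sub_apply]
  rw [Real.norm_of_nonneg (mul_nonneg (by positivity) (hv.nonneg x hx)), ← add_mul, ← mul_assoc]
  exact mul_le_mul_of_nonneg_right (abs_sub_rpow_le_two_rpow_mul hp _ _) (hv.nonneg x hx)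

lemma setIntegral_Icc_abs_rpow_mul_le (hp : 0 ≤ p) (hv : ∀ x, 0 ≤ x → 0 ≤ v x)
    (hf : MemLpW p v f) (hg : MemLpW p v g) (hfg : MemLpW p v (f - g)) (a : ℝ) :
    ∫ x in Icc 0 a, |g x| ^ p * v x ≤
      2 ^ p * ((∫ x in Ici 0, |f x - g x| ^ p * v x) + ∫ x in Icc 0 a, |f x| ^ p * v x) := by
  have hfgi : IntegrableOn (fun x => |f x - g x| ^ p * v x) (Ici 0) := hfg.2
  have hfi : IntegrableOn (fun x => |f x| ^ p * v x) (Icc 0 a) := hf.2.mono_set Icc_subset_Ici_self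
  have hgi : IntegrableOn (fun x => |g x| ^ p * v x) (Icc 0 a) := hg.2.mono_set Icc_subset_Ici_self
  have hfgi' := hfgi.mono_set (Icc_subset_Ici_self : Icc 0 a ⊆ Ici 0)
  calc ∫ x in Icc 0 a, |g x| ^ p * v x
      ≤ ∫ x in Icc 0 a, 2 ^ p * (|f x - g x| ^ p * v x + |f x| ^ p * v x) := by
        refine setIntegral_mono_on hgi ((hfgi'.add hfi).const_mul _) measurableSet_Icc
          fun x hx => ?_
        rw [← add_mul, ← mul_assoc]
        exact mul_le_mul_of_nonneg_right (abs_rpow_le_two_rpow_mul hp _ _) (hv x hx.1)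
    _ = 2 ^ p * ((∫ x in Icc 0 a, |f x - g x| ^ p * v x) +
          ∫ x in Icc 0 a, |f x| ^ p * v x) := by
        rw [integral_const_mul, integral_add hfgi' hfi]
    _ ≤ 2 ^ p * ((∫ x in Ici 0, |f x - g x| ^ p * v x) +
          ∫ x in Icc 0 a, |f x| ^ p * v x) := by
        gcongr
        · filter_upwards [ae_restrict_mem measurableSet_Ici] with x hx
          exact mul_nonneg (by positivity) (hv x hx)
        · exact Icc_subset_Ici_self

end MemLpW

theorem lp_recurrent_implies_not_tendsto_zero_on_interval
    (p : ℝ) (hp : 0 < p) (v : ℝ → ℝ) (hv : AdmissibleWeight v)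
    (f : ℝ → ℝ) (hf : MemLpW p v f) (hfne : lpNorm p v f ≠ 0)
    (hrec : ∃ tk : ℕ → ℝ, (∀ k, 0 ≤ tk k) ∧ StrictMono tk ∧
      Filter.Tendsto tk Filter.atTop Filter.atTop ∧
      Filter.Tendsto (fun k => lpNorm p v (translateW (tk k) f - f)) Filter.atTop (nhds 0)) :
    ∃ a > (0:ℝ),
      ¬ Filter.Tendsto
        (fun t => (∫ x in Set.Icc (0:ℝ) a, |f (x + t)| ^ p * v x) ^ (1 / p))
        Filter.atTop (nhds 0) := by
  obtain ⟨tk, htk0, -, htk, hnorm⟩ := hrec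
  by_contra! hwindow
  have hfk (k : ℕ) : MemLpW p v (translateW (tk k) f) := hf.translate hv (htk0 k)
  have hdiff : Tendsto (fun k => ∫ x in Ici 0, |f (x + tk k) - f x| ^ p * v x) atTop (nhds 0) :=
    tendsto_nhds_zero_of_tendsto_rpow_one_div hp
      (fun _ => setIntegral_abs_rpow_mul_nonneg hv.nonneg measurableSet_Ici subset_rfl) hnorm
  refine hfne ?_
  suffices ∫ x in Ici 0, |f x| ^ p * v x = 0 by
    rw [_root_.lpNorm, this, Real.zero_rpow (one_div_ne_zero hp.ne')]
  refine setIntegral_Ici_eq_zero_of_forall_Icc hf.2 fun a ha => le_antisymm ?_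
    (setIntegral_abs_rpow_mul_nonneg hv.nonneg measurableSet_Icc Icc_subset_Ici_self)
  have hwindow_a := tendsto_nhds_zero_of_tendsto_rpow_one_div hp
    (fun _ => setIntegral_abs_rpow_mul_nonneg hv.nonneg measurableSet_Icc Icc_subset_Ici_self)
    (hwindow a ha)
  refine ge_of_tendsto' (by simpa using (hdiff.add (hwindow_a.comp htk)).const_mul (2 ^ p))
    fun k => ?_
  exact setIntegral_Icc_abs_rpow_mul_le hp.le hv.nonneg (hfk k) hf ((hfk k).sub hp.le hv hf) a
end

section
/- Let v be an admissible weight function, and let 𝒯 = {T_t : t ≥ 0} be the semigroup of left translation operators on X = C_{0,v}(ℝ₊). If there exist f, g ∈ X forming a Li-Yorke scrambled pair for 𝒯, then 𝒯 has infinite topological entropy. -/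
open MeasureTheory Filter Set
open scoped ENNReal

/-- Membership in `C_{0,v}(ℝ₊)`: continuous on `[0,∞)` with `|f x| * v x → 0` as `x → ∞`. -/
def MemC0 (v : ℝ → ℝ) (f : ℝ → ℝ) : Prop :=
  ContinuousOn f (Set.Ici (0:ℝ)) ∧
    Filter.Tendsto (fun x => |f x| * v x) Filter.atTop (nhds 0)

/-- The norm on `C_{0,v}(ℝ₊)`: `‖f‖ = sup { |f x| * v x : x ≥ 0 }`. -/
noncomputable def c0Norm (v : ℝ → ℝ) (f : ℝ → ℝ) : ℝ :=
  sSup ((fun x => |f x| * v x) '' Set.Ici (0:ℝ))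

/-- `S` is a `(t,ε)`-separated set for the family `{T_u : u ≥ 0}` with respect to the
distance `d`: distinct points of `S` are `ε`-apart at some time `u ∈ [0,t]`. -/
def IsSepSet {X : Type*} (d : X → X → ℝ) (T : ℝ → X → X) (t ε : ℝ) (S : Set X) : Prop :=
  ∀ f ∈ S, ∀ g ∈ S, f ≠ g → ∃ u ∈ Set.Icc (0:ℝ) t, ε ≤ d (T u f) (T u g)

/-- The largest cardinality `s_{t,ε}(𝒯,K)` of a `(t,ε)`-separated subset of `K`
(as an extended natural number, viewed in `ℝ≥0∞`). -/
noncomputable def maxSep {X : Type*} (d : X → X → ℝ) (T : ℝ → X → X) (K : Set X)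
    (t ε : ℝ) : ℝ≥0∞ :=
  ⨆ (S : Finset X) (_ : ↑S ⊆ K ∧ IsSepSet d T t ε ↑S), (S.card : ℝ≥0∞)

open Classical in
/-- Extended-real logarithm of an extended nonnegative real. -/
noncomputable def elog (x : ℝ≥0∞) : EReal :=
  if x = ⊤ then ⊤ else ((Real.log x.toReal : ℝ) : EReal)

/-- The topological entropy `h(𝒯,K)` of the family `{T_u : u ≥ 0}` on the set `K`,
with respect to the distance `d`; since `ε ↦ limsup_t (1/t) log s_{t,ε}` is antitone,
the limit as `ε → 0⁺` is the supremum over `ε > 0`. -/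
noncomputable def entropyOn {X : Type*} (d : X → X → ℝ) (T : ℝ → X → X) (K : Set X) : EReal :=
  ⨆ (ε : ℝ) (_ : 0 < ε),
    Filter.limsup (fun t : ℝ => ((t⁻¹ : ℝ) : EReal) * elog (maxSep d T K t ε)) Filter.atTop

/-- Sequential compactness of a set with respect to a (pseudo)distance `d`; for metric
spaces this is equivalent to compactness. -/
def DSeqCompact {X : Type*} (d : X → X → ℝ) (K : Set X) : Prop :=
  ∀ u : ℕ → X, (∀ n, u n ∈ K) → ∃ g ∈ K, ∃ φ : ℕ → ℕ, StrictMono φ ∧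
    Filter.Tendsto (fun n => d (u (φ n)) g) Filter.atTop (nhds 0)

/-- The topological entropy `h(𝒯) = sup { h(𝒯,K) : K ⊆ A compact }` of the family
`{T_u : u ≥ 0}` on the space `A`, with respect to the distance `d`. -/
noncomputable def entropyFam {X : Type*} (d : X → X → ℝ) (T : ℝ → X → X) (A : Set X) : EReal :=
  ⨆ (K : Set X) (_ : K ⊆ A ∧ DSeqCompact d K), entropyOn d T K

/-! A Li–Yorke pair `f, g` forces the weight to drop by arbitrarily large factors:
`‖T_t (f - g)‖ ≥ c` for arbitrarily large `t` is witnessed at some `x` with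
`|(f - g)(x + t)| v x > c/2`, while `|(f - g)(x + t)| v (x + t)` is tiny, so `v (x + t) ≪ v x`.
By admissibility such a drop needs a long gap `t`. Given a drop `C v (x + t) ≤ η v x`, place
`N` disjoint tents of height `1 / v x` in the unit window ending at `x + t`: each has norm at most
`η`, and translating any of them back to `x` by a time in `[0, t]` separates it from all the others
by `1`. Taking `N ≈ exp (m t)` tents with `η = 1/(m+1)` at level `m`, the tents of all levels
together with `0` form a compact set on which `(1/t) log s_{t,1}` reaches `m` for every `m`. -/

open Filter Set Topology

section Weight

variable {v : ℝ → ℝ}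

theorem AdmissibleWeight.exists_le_mul_of_sub_le (hv : AdmissibleWeight v) (d : ℝ) :
    ∃ C, ∀ x y, 0 ≤ x → x ≤ y → y - x ≤ d → v x ≤ C * v y := by
  obtain ⟨hpos, -, M, hM, w, hw, hadm⟩ := hv
  refine ⟨M * Real.exp (w * d), fun x y hx hxy hd => ?_⟩
  calc v x ≤ M * Real.exp (w * (y - x)) * v (x + (y - x)) := hadm x hx (y - x) (by linarith)
    _ ≤ M * Real.exp (w * d) * v y := by
      rw [add_sub_cancel]
      have := (hpos y (hx.trans hxy)).le
      gcongr

theorem AdmissibleWeight.exists_drop (hv : AdmissibleWeight v) (hR : ¬BddAbove (ratioSet v))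
    (L d : ℝ) : ∃ x, 0 ≤ x ∧ ∃ t, d ≤ t ∧ L * v (x + t) ≤ v x := by
  obtain ⟨C, hC⟩ := hv.exists_le_mul_of_sub_le d
  obtain ⟨-, ⟨x, y, hx, hxy, rfl⟩, hlt⟩ := not_bddAbove_iff.1 hR (max L C)
  have hy : 0 < v y := hv.1 y (hx.trans hxy)
  rw [lt_div_iff₀ hy, max_mul_of_nonneg _ _ hy.le, max_lt_iff] at hlt
  refine ⟨x, hx, y - x, ?_, by rw [add_sub_cancel]; exact hlt.1.le⟩
  by_contra! hgap
  linarith [hC x y hx hxy hgap.le]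

end Weight

section Norm

variable {v : ℝ → ℝ}

theorem c0Norm_le {F : ℝ → ℝ} {b : ℝ} (h : ∀ x, 0 ≤ x → |F x| * v x ≤ b) : c0Norm v F ≤ b :=
  csSup_le (nonempty_Ici.image _) (forall_mem_image.2 h)

theorem c0Norm_nonneg (hpos : ∀ x, 0 ≤ x → 0 < v x) (F : ℝ → ℝ) : 0 ≤ c0Norm v F :=
  Real.sSup_nonneg (forall_mem_image.2 fun x hx => mul_nonneg (abs_nonneg _) (hpos x hx).le)

theorem c0Norm_zero : c0Norm v 0 = 0 := by
  simp only [c0Norm, Pi.zero_apply, abs_zero, zero_mul, nonempty_Ici.image_const, csSup_singleton]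

theorem memC0_of_continuous_of_eq_zero {F : ℝ → ℝ} (hF : Continuous F) {Y : ℝ}
    (hY : ∀ x, Y < x → F x = 0) : MemC0 v F := by
  refine ⟨hF.continuousOn, tendsto_const_nhds.congr' ?_⟩
  filter_upwards [eventually_gt_atTop Y] with x hx
  rw [hY x hx, abs_zero, zero_mul]

theorem MemC0.sub (hpos : ∀ x, 0 ≤ x → 0 < v x) {f g : ℝ → ℝ} (hf : MemC0 v f)
    (hg : MemC0 v g) : MemC0 v (f - g) := by
  refine ⟨hf.1.sub hg.1, squeeze_zero' ?_ ?_ (by simpa using hf.2.add hg.2)⟩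
  · filter_upwards [eventually_ge_atTop 0] with x hx
    exact mul_nonneg (abs_nonneg _) (hpos x hx).le
  · filter_upwards [eventually_ge_atTop 0] with x hx
    calc |(f - g) x| * v x ≤ (|f x| + |g x|) * v x :=
          mul_le_mul_of_nonneg_right (abs_sub _ _) (hpos x hx).le
      _ = |f x| * v x + |g x| * v x := add_mul _ _ _

theorem MemC0.translateW (hv : AdmissibleWeight v) {F : ℝ → ℝ} (hF : MemC0 v F) {u : ℝ}
    (hu : 0 ≤ u) : MemC0 v (translateW u F) := by
  obtain ⟨C, hC⟩ := hv.exists_le_mul_of_sub_le u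
  have hshift : Tendsto (fun x => |F (x + u)| * v (x + u)) atTop (𝓝 0) :=
    hF.2.comp (tendsto_atTop_add_const_right _ u tendsto_id)
  refine ⟨hF.1.comp (continuous_add_const u).continuousOn fun x hx => ?_,
    squeeze_zero' ?_ ?_ (by simpa using hshift.const_mul C)⟩
  · exact add_nonneg hx hu
  · filter_upwards [eventually_ge_atTop 0] with x hx
    exact mul_nonneg (abs_nonneg _) (hv.1 x hx).le
  · filter_upwards [eventually_ge_atTop 0] with x hx
    calc |F (x + u)| * v x ≤ |F (x + u)| * (C * v (x + u)) :=
          mul_le_mul_of_nonneg_left (hC x (x + u) hx (by linarith) (by linarith)) (abs_nonneg _)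
      _ = C * (|F (x + u)| * v (x + u)) := by ring

theorem MemC0.bddAbove (hv : AdmissibleWeight v) {F : ℝ → ℝ} (hF : MemC0 v F) :
    BddAbove ((fun x => |F x| * v x) '' Ici 0) := by
  obtain ⟨R, hR⟩ := eventually_atTop.1 ((tendsto_order.1 hF.2).2 1 one_pos)
  obtain ⟨A, hA⟩ := isCompact_Icc.exists_bound_of_continuousOn
    (hF.1.mono (Icc_subset_Ici_self : Icc 0 R ⊆ Ici 0))
  obtain ⟨C, hC⟩ := hv.exists_le_mul_of_sub_le R
  refine ⟨max 1 (A * (C * v R)), forall_mem_image.2 fun x hx => ?_⟩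
  rcases le_or_gt x R with hxR | hxR
  · have hFx : |F x| ≤ A := hA x ⟨hx, hxR⟩
    refine le_max_of_le_right (mul_le_mul hFx ?_ (hv.1 x hx).le ((abs_nonneg _).trans hFx))
    exact hC x R hx hxR (by linarith [mem_Ici.1 hx])
  · exact le_max_of_le_left (hR x hxR.le).le

theorem le_c0Norm (hv : AdmissibleWeight v) {F : ℝ → ℝ} (hF : MemC0 v F) {x : ℝ} (hx : 0 ≤ x) :
    |F x| * v x ≤ c0Norm v F :=
  le_csSup (hF.bddAbove hv) (mem_image_of_mem _ hx)

theorem not_bddAbove_ratioSet_of_frequently_le_c0Norm (hpos : ∀ x, 0 ≤ x → 0 < v x)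
    {h : ℝ → ℝ} (hh : Tendsto (fun x => |h x| * v x) atTop (𝓝 0)) {c : ℝ} (hc : 0 < c)
    (hfreq : ∃ᶠ t in atTop, c ≤ c0Norm v (translateW t h)) : ¬BddAbove (ratioSet v) := by
  rintro ⟨L, hL⟩
  set L' := max L 1
  obtain ⟨R, hR⟩ := eventually_atTop.1
    ((tendsto_order.1 (by simpa using hh.const_mul L')).2 (c / 2) (half_pos hc))
  obtain ⟨t, ht, hct⟩ := frequently_atTop.1 hfreq (max R 0)
  obtain ⟨hRt, ht0⟩ := max_le_iff.1 ht
  obtain ⟨x, hx, hxc⟩ : ∃ x, 0 ≤ x ∧ c / 2 < |h (x + t)| * v x := by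
    by_contra! hle
    linarith [c0Norm_le (F := translateW t h) hle]
  have hvxt : 0 < v (x + t) := hpos _ (by linarith)
  have hdrop : |h (x + t)| * (L' * v (x + t)) < |h (x + t)| * v x := by
    linarith [hR (x + t) (by linarith)]
  have hratio := hL ⟨x, x + t, hx, by linarith, rfl⟩
  rw [div_le_iff₀ hvxt] at hratio
  linarith [lt_of_mul_lt_mul_left hdrop (abs_nonneg _),
    mul_le_mul_of_nonneg_right (le_max_left L 1) hvxt.le]

end Norm

noncomputable section Comb

def tent (a r z : ℝ) : ℝ := max 0 (1 - |z - a| / r)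

theorem tent_nonneg (a r z : ℝ) : 0 ≤ tent a r z := le_max_left _ _

theorem tent_le_one {r : ℝ} (hr : 0 ≤ r) (a z : ℝ) : tent a r z ≤ 1 :=
  max_le zero_le_one (sub_le_self _ (div_nonneg (abs_nonneg _) hr))

theorem tent_self (a r : ℝ) : tent a r a = 1 := by simp [tent]

theorem tent_eq_zero {a r z : ℝ} (hr : 0 < r) (h : r ≤ |z - a|) : tent a r z = 0 :=
  max_eq_left (by rw [sub_nonpos, one_le_div hr]; exact h)

theorem continuous_tent (a r : ℝ) : Continuous (tent a r) := by
  unfold tent; fun_prop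

def comb (B a : ℝ) (N j : ℕ) (z : ℝ) : ℝ := B * tent (a + (j + 1) / (N + 1)) (N + 1)⁻¹ z

variable {B a : ℝ} {N j k : ℕ}

theorem comb_apply_center : comb B a N j (a + (j + 1) / (N + 1)) = B := by
  simp [comb, tent_self]

theorem comb_apply_center_of_ne (hjk : j ≠ k) : comb B a N j (a + (k + 1) / (N + 1)) = 0 := by
  have hjk' : (1 : ℝ) ≤ |(k : ℝ) - j| := by
    exact_mod_cast Int.one_le_abs (sub_ne_zero.2 (by exact_mod_cast hjk.symm : (k : ℤ) ≠ j))
  refine mul_eq_zero_of_right _ (tent_eq_zero (by positivity) ?_)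
  rw [show a + (k + 1) / (N + 1) - (a + (j + 1) / (N + 1)) = ((k : ℝ) - j) * (N + 1 : ℝ)⁻¹ by ring,
    abs_mul, abs_of_pos (by positivity : (0 : ℝ) < (N + 1 : ℝ)⁻¹)]
  exact le_mul_of_one_le_left (by positivity) hjk'

theorem comb_center_mem (hj : j < N) : a + (j + 1) / (N + 1) ∈ Icc a (a + 1) := by
  have hjN : (j : ℝ) + 1 ≤ N + 1 := by exact_mod_cast Nat.succ_le_succ hj.le
  constructor
  · have : (0 : ℝ) ≤ (j + 1) / (N + 1) := by positivity
    linarith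
  · linarith [(div_le_one (by positivity : (0 : ℝ) < N + 1)).2 hjN]

theorem mem_Icc_of_comb_ne_zero (hj : j < N) {z : ℝ} (h : comb B a N j z ≠ 0) :
    z ∈ Icc a (a + 1) := by
  have hclose : |z - (a + (j + 1) / (N + 1))| < (N + 1 : ℝ)⁻¹ := by
    by_contra! hfar
    exact h (mul_eq_zero_of_right _ (tent_eq_zero (by positivity) hfar))
  have hjN : (j : ℝ) + 2 ≤ N + 1 := by exact_mod_cast Nat.succ_le_succ hj
  have hN : (0 : ℝ) < N + 1 := by positivity
  rw [abs_sub_lt_iff] at hclose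
  have hlo : (0 : ℝ) ≤ j / (N + 1) := by positivity
  have hhi : (j + 2 : ℝ) / (N + 1) ≤ 1 := (div_le_one hN).2 hjN
  constructor
  · have : (j + 1 : ℝ) / (N + 1) - (N + 1 : ℝ)⁻¹ = j / (N + 1) := by field_simp; ring
    linarith
  · have : (j + 1 : ℝ) / (N + 1) + (N + 1 : ℝ)⁻¹ = (j + 2) / (N + 1) := by field_simp; ring
    linarith

theorem continuous_comb : Continuous (comb B a N j) :=
  continuous_const.mul (continuous_tent _ _)

theorem abs_comb_le (hB : 0 ≤ B) (z : ℝ) : |comb B a N j z| ≤ B := by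
  rw [comb, abs_of_nonneg (mul_nonneg hB (tent_nonneg _ _ _))]
  exact mul_le_of_le_one_right hB (tent_le_one (by positivity) _ _)

theorem memC0_comb {v : ℝ → ℝ} (hj : j < N) : MemC0 v (comb B a N j) :=
  memC0_of_continuous_of_eq_zero continuous_comb fun _ hx =>
    by_contra fun h => (not_le.2 hx) (mem_Icc_of_comb_ne_zero hj h).2

end Comb

section Separated

open scoped Classical

variable {v : ℝ → ℝ}

theorem c0Norm_comb_le (hpos : ∀ x, 0 ≤ x → 0 < v x) {C : ℝ}
    (hC : ∀ y, 1 ≤ y → ∀ z ∈ Icc (y - 1) y, v z ≤ C * v y) {B Y : ℝ} (hB : 0 ≤ B) (hY : 1 ≤ Y)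
    {N j : ℕ} (hj : j < N) : c0Norm v (comb B (Y - 1) N j) ≤ B * (C * v Y) := by
  refine c0Norm_le fun z hz => ?_
  by_cases h : comb B (Y - 1) N j z = 0
  · have := hC Y hY Y ⟨by linarith, le_rfl⟩
    rw [h, abs_zero, zero_mul]
    exact mul_nonneg hB (by linarith [hpos Y (by linarith)])
  · have hzY := mem_Icc_of_comb_ne_zero hj h
    rw [sub_add_cancel] at hzY
    exact mul_le_mul (abs_comb_le hB z) (hC Y hY z hzY) (hpos z hz).le hB

theorem isSepSet_comb (hv : AdmissibleWeight v) {X T : ℝ} (hX : 0 ≤ X) (hT : 1 ≤ T) (N : ℕ) :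
    IsSepSet (fun f g => c0Norm v (f - g)) translateW T 1
      ((Finset.range N).image (comb (v X)⁻¹ (X + T - 1) N) : Set (ℝ → ℝ)) := by
  simp only [IsSepSet, Finset.coe_image, Finset.coe_range, forall_mem_image, mem_Iio]
  intro j hj k hk hne
  have hjk : j ≠ k := fun h => hne (h ▸ rfl)
  set c := X + T - 1 + (j + 1) / (N + 1)
  have hc := comb_center_mem (a := X + T - 1) hj
  have hu : 0 ≤ c - X := by linarith [hc.1]
  refine ⟨c - X, ⟨hu, by linarith [hc.2]⟩, ?_⟩
  calc (1 : ℝ) = |translateW (c - X) (comb (v X)⁻¹ (X + T - 1) N j) X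
        - translateW (c - X) (comb (v X)⁻¹ (X + T - 1) N k) X| * v X := by
        simp only [translateW, add_sub_cancel, c, comb_apply_center,
          comb_apply_center_of_ne hjk.symm, sub_zero]
        rw [abs_of_pos (inv_pos.2 (hv.1 X hX)), inv_mul_cancel₀ (hv.1 X hX).ne']
    _ ≤ _ := le_c0Norm hv
        (((memC0_comb hj).translateW hv hu).sub hv.1 ((memC0_comb hk).translateW hv hu)) hX

theorem exists_separated_finset (hv : AdmissibleWeight v) {C : ℝ}
    (hC : ∀ y, 1 ≤ y → ∀ z ∈ Icc (y - 1) y, v z ≤ C * v y) {X T η : ℝ} (hX : 0 ≤ X)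
    (hT : 1 ≤ T) (hdrop : C * v (X + T) ≤ η * v X) (N : ℕ) :
    ∃ S : Finset (ℝ → ℝ), S.card = N ∧ (∀ q ∈ S, MemC0 v q ∧ c0Norm v q ≤ η) ∧
      IsSepSet (fun f g => c0Norm v (f - g)) translateW T 1 S := by
  have hvX := hv.1 X hX
  have hB : 0 ≤ (v X)⁻¹ := (inv_pos.2 hvX).le
  refine ⟨(Finset.range N).image (comb (v X)⁻¹ (X + T - 1) N), ?_, ?_, isSepSet_comb hv hX hT N⟩
  · refine (Finset.card_image_of_injOn fun j _ k _ hjk => ?_).trans (Finset.card_range N)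
    by_contra hne
    have := congrFun hjk (X + T - 1 + (j + 1) / (N + 1))
    rw [comb_apply_center, comb_apply_center_of_ne (Ne.symm hne)] at this
    exact (inv_pos.2 hvX).ne' this
  · simp only [Finset.mem_image, Finset.mem_range, forall_exists_index, and_imp]
    rintro _ j hj rfl
    refine ⟨memC0_comb hj, ?_⟩
    calc c0Norm v (comb (v X)⁻¹ (X + T - 1) N j) ≤ (v X)⁻¹ * (C * v (X + T)) :=
          c0Norm_comb_le hv.1 hC hB (by linarith) hj
      _ ≤ (v X)⁻¹ * (η * v X) := mul_le_mul_of_nonneg_left hdrop hB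
      _ = η := by field_simp

end Separated

section Entropy

variable {X : Type*}

theorem dSeqCompact_insert_iUnion (d : X → X → ℝ) (hd : ∀ x, d x x = 0) (a : X)
    (S : ℕ → Finset X) {ε : ℕ → ℝ} (hε : Tendsto ε atTop (𝓝 0))
    (hSa : ∀ m, ∀ x ∈ S m, |d x a| ≤ ε m) : DSeqCompact d (insert a (⋃ m, (S m : Set X))) := by
  intro u hu
  by_cases hrep : ∃ b ∈ insert a (⋃ m, (S m : Set X)), ∃ᶠ n in atTop, u n = b
  · obtain ⟨b, hb, hfreq⟩ := hrep
    obtain ⟨φ, hφ, hφb⟩ := extraction_of_frequently_atTop hfreq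
    refine ⟨b, hb, φ, hφ, ?_⟩
    simp only [hφb, hd, tendsto_const_nhds]
  push Not at hrep
  refine ⟨a, mem_insert _ _, id, strictMono_id, Metric.tendsto_atTop.2 fun r hr => ?_⟩
  obtain ⟨m₀, hm₀⟩ := eventually_atTop.1 ((tendsto_order.1 hε).2 r hr)
  have hfin : (insert a (⋃ m ∈ Iio m₀, (S m : Set X))).Finite :=
    ((finite_Iio m₀).biUnion fun m _ => (S m).finite_toSet).insert a
  obtain ⟨N, hN⟩ := eventually_atTop.1 <| hfin.eventually_all.2 fun b hb =>
    hrep b (insert_subset_insert (iUnion₂_subset_iUnion _ _) hb)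
  refine ⟨N, fun n hn => ?_⟩
  obtain ⟨m, hm⟩ : ∃ m, u n ∈ S m := by
    rcases hu n with ha | hS
    · exact absurd ha (hN n hn a (mem_insert _ _))
    · exact mem_iUnion.1 hS
  have hm₀m : m₀ ≤ m := by
    by_contra! hlt
    exact hN n hn (u n) (mem_insert_of_mem _ (mem_biUnion hlt hm)) rfl
  rw [Real.dist_eq, sub_zero]
  exact (hSa m _ hm).trans_lt (hm₀ m hm₀m)

theorem coe_le_inv_mul_elog {r s : ℝ} (hs : 0 < s) {x : ℝ≥0∞}
    (h : ENNReal.ofReal (Real.exp (r * s)) ≤ x) : (r : EReal) ≤ ((s⁻¹ : ℝ) : EReal) * elog x := by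
  have hle : ((r * s : ℝ) : EReal) ≤ elog x := by
    unfold elog
    split_ifs with hx
    · exact le_top
    · rw [ENNReal.ofReal_le_iff_le_toReal hx] at h
      exact EReal.coe_le_coe_iff.2 ((Real.le_log_iff_exp_le ((Real.exp_pos _).trans_le h)).2 h)
  calc (r : EReal) = ((s⁻¹ : ℝ) : EReal) * ((r * s : ℝ) : EReal) := by
        rw [← EReal.coe_mul]; field_simp
    _ ≤ _ := mul_le_mul_of_nonneg_left hle (EReal.coe_nonneg.2 (inv_nonneg.2 hs.le))

theorem entropyOn_eq_top_of_exists_isSepSet (d : X → X → ℝ) (T : ℝ → X → X) (K : Set X)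
    {ε : ℝ} (hε : 0 < ε) {t : ℕ → ℝ} (ht : Tendsto t atTop atTop) (htpos : ∀ m, 0 < t m)
    (hS : ∀ m : ℕ, ∃ S : Finset X, ↑S ⊆ K ∧ IsSepSet d T (t m) ε ↑S ∧
      Real.exp (m * t m) ≤ S.card) :
    entropyOn d T K = ⊤ := by
  have hlevel : ∀ m : ℕ, ((m : ℝ) : EReal) ≤ ((t m)⁻¹ : ℝ) * elog (maxSep d T K (t m) ε) := by
    intro m
    obtain ⟨S, hSK, hSsep, hcard⟩ := hS m
    refine coe_le_inv_mul_elog (htpos m) ?_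
    calc ENNReal.ofReal (Real.exp (m * t m)) ≤ S.card := by
          rw [← ENNReal.ofReal_natCast]; exact ENNReal.ofReal_le_ofReal hcard
      _ ≤ maxSep d T K (t m) ε := le_iSup₂_of_le S ⟨hSK, hSsep⟩ le_rfl
  have hlimsup : limsup (fun s : ℝ => ((s⁻¹ : ℝ) : EReal) * elog (maxSep d T K s ε)) atTop = ⊤ := by
    refine (EReal.eq_top_iff_forall_lt _).2 fun y =>
      (EReal.coe_lt_coe_iff.2 (lt_add_one y)).trans_le ?_
    refine le_limsup_of_frequently_le (ht.frequently (Eventually.frequently ?_))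
    filter_upwards [eventually_ge_atTop ⌈y + 1⌉₊] with m hm
    exact (EReal.coe_le_coe_iff.2 ((Nat.le_ceil _).trans (by exact_mod_cast hm))).trans (hlevel m)
  exact eq_top_iff.2 (hlimsup ▸ le_iSup₂_of_le ε hε le_rfl)

end Entropy

theorem entropyFam_eq_top_of_not_bddAbove_ratioSet {v : ℝ → ℝ} (hv : AdmissibleWeight v)
    (hR : ¬BddAbove (ratioSet v)) :
    entropyFam (fun f g => c0Norm v (f - g)) translateW {f | MemC0 v f} = ⊤ := by
  obtain ⟨C, hC⟩ := hv.exists_le_mul_of_sub_le 1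
  have hwindow : ∀ y, 1 ≤ y → ∀ z ∈ Icc (y - 1) y, v z ≤ C * v y := fun y hy z hz =>
    hC z y (by linarith [hz.1]) hz.2 (by linarith [hz.1])
  have hlevel : ∀ m : ℕ, ∃ T, (m : ℝ) + 1 ≤ T ∧ ∃ S : Finset (ℝ → ℝ),
      S.card = ⌈Real.exp (m * T)⌉₊ ∧ (∀ q ∈ S, MemC0 v q ∧ c0Norm v q ≤ 1 / (m + 1)) ∧
      IsSepSet (fun f g => c0Norm v (f - g)) translateW T 1 S := by
    intro m
    obtain ⟨X, hX, T, hT, hdrop⟩ := hv.exists_drop hR (C * (m + 1)) (m + 1)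
    refine ⟨T, hT, exists_separated_finset hv hwindow hX (by linarith [m.cast_nonneg' (α := ℝ)])
      ?_ _⟩
    rw [one_div, inv_mul_eq_div, le_div_iff₀ (by positivity)]
    linarith
  choose T hT S hcard hS hsep using hlevel
  set K : Set (ℝ → ℝ) := insert 0 (⋃ m, (S m : Set (ℝ → ℝ)))
  have hK : K ⊆ {f | MemC0 v f} :=
    insert_subset (memC0_of_continuous_of_eq_zero continuous_const (Y := 0) fun _ _ => rfl)
      (iUnion_subset fun m q hq => (hS m q hq).1)
  have hKcompact : DSeqCompact (fun f g => c0Norm v (f - g)) K :=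
    dSeqCompact_insert_iUnion _ (fun f => by rw [sub_self, c0Norm_zero]) 0 S
      tendsto_one_div_add_atTop_nhds_zero_nat fun m q hq => by
        rw [sub_zero, abs_of_nonneg (c0Norm_nonneg hv.1 q)]; exact (hS m q hq).2
  have hentropy := entropyOn_eq_top_of_exists_isSepSet (fun f g => c0Norm v (f - g)) translateW K
    one_pos (tendsto_atTop_mono hT (tendsto_atTop_add_const_right _ 1 tendsto_natCast_atTop_atTop))
    (fun m => by linarith [hT m, m.cast_nonneg' (α := ℝ)])
    fun m => ⟨S m, fun q hq => mem_insert_of_mem _ (mem_iUnion.2 ⟨m, hq⟩), hsep m,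
      hcard m ▸ Nat.le_ceil _⟩
  exact eq_top_iff.2 (hentropy ▸ le_iSup₂_of_le K ⟨hK, hKcompact⟩ le_rfl)

theorem c0_infinite_entropy_of_liYorke_pair
    (v : ℝ → ℝ) (hv : AdmissibleWeight v)
    (hLY : ∃ f g, MemC0 v f ∧ MemC0 v g ∧
      -- liminf_{t→∞} ‖T_t f − T_t g‖ = 0
      (∀ ε > (0:ℝ), ∃ᶠ t in Filter.atTop,
        c0Norm v (translateW t f - translateW t g) < ε) ∧
      -- limsup_{t→∞} ‖T_t f − T_t g‖ > 0
      (∃ c > (0:ℝ), ∃ᶠ t in Filter.atTop,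
        c ≤ c0Norm v (translateW t f - translateW t g))) :
    entropyFam (fun f g => c0Norm v (f - g)) translateW {f | MemC0 v f} = ⊤ := by
  obtain ⟨f, g, hf, hg, -, c, hc, hfreq⟩ := hLY
  exact entropyFam_eq_top_of_not_bddAbove_ratioSet hv
    (not_bddAbove_ratioSet_of_frequently_le_c0Norm hv.1 (hf.sub hv.1 hg).2 hc hfreq)
end

section
/- Let 0 < p < ∞ and let v be the constant weight function v(x) = c for some c > 0. Then for every t > 0, the left translation operator T_t is chain transitive on L^p_v(ℝ₊): for all f, g ∈ L^p_v(ℝ₊) and every ε > 0, there is an ε-chain for T_t from f to g. -/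
open MeasureTheory Filter Set
open scoped ENNReal

/-!
Every `f` is `ε`-chained to `0` and `0` to every `g`. Translating `f` costs nothing until the
tail `T_{Nt} f` has norm `< ε` (the tails of an integrable function vanish), and then one jumps
to `0`. From `0` one fades `g` in: with `S_s` the zero-padded right shift, the `j`-th point is
`(j/m) S_{(m-j)t} g`; `T_t` carries it to `(j/m) S_{(m-j-1)t} g`, which differs from the next
point by `(1/m) S_{(m-j-1)t} g`, of norm `‖g‖/m < ε` since `T_t S_s = S_{s-t}` on `[0,∞)`.
-/

open Topology

lemma measurePreserving_add_restrict_Ici {a b s : ℝ} (h : a + s = b) :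
    MeasurePreserving (· + s) (volume.restrict (Ici a)) (volume.restrict (Ici b)) := by
  have := (measurePreserving_add_right volume s).restrict_preimage_emb
    (measurableEmbedding_addRight s) (Ici b)
  subst h
  rwa [preimage_add_const_Ici, add_sub_cancel_right] at this

lemma setIntegral_Ici_comp_add {a b s : ℝ} (h : a + s = b) (φ : ℝ → ℝ) :
    ∫ x in Ici a, φ (x + s) = ∫ x in Ici b, φ x :=
  (measurePreserving_add_restrict_Ici h).integral_comp (measurableEmbedding_addRight s) φ

lemma integrableOn_Ici_comp_add_iff {a b s : ℝ} (h : a + s = b) {φ : ℝ → ℝ} :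
    IntegrableOn (fun x => φ (x + s)) (Ici a) ↔ IntegrableOn φ (Ici b) :=
  (measurePreserving_add_restrict_Ici h).integrable_comp_emb (measurableEmbedding_addRight s)

section Weight

variable {p : ℝ} {v : ℝ → ℝ}

lemma lpNorm_congr {d d' : ℝ → ℝ} (h : EqOn d d' (Ici 0)) : lpNorm p v d = lpNorm p v d' := by
  unfold _root_.lpNorm
  rw [setIntegral_congr_fun measurableSet_Ici fun x hx => by rw [h hx]]

lemma MemLpW.congr {f f' : ℝ → ℝ} (hf : MemLpW p v f) (h : EqOn f f' (Ici 0)) :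
    MemLpW p v f' := by
  have hae : f =ᵐ[volume.restrict (Ici 0)] f' := (ae_restrict_mem measurableSet_Ici).mono h
  exact ⟨hf.1.congr hae, hf.2.congr (hae.mono fun x hx => by simp only [hx])⟩

lemma lpNorm_zero (hp : p ≠ 0) : lpNorm p v 0 = 0 := by
  simp [_root_.lpNorm, Real.zero_rpow hp, hp]

lemma memLpW_zero (hp : p ≠ 0) : MemLpW p v 0 :=
  ⟨aestronglyMeasurable_zero, by simp [Real.zero_rpow hp]⟩

lemma lpNorm_nonneg (hv : ∀ x ∈ Ici (0:ℝ), 0 ≤ v x) (f : ℝ → ℝ) : 0 ≤ lpNorm p v f :=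
  Real.rpow_nonneg (setIntegral_nonneg measurableSet_Ici fun x hx => by
    have := hv x hx; positivity) _

lemma abs_smul_rpow_mul (a : ℝ) (f : ℝ → ℝ) (x : ℝ) :
    |(a • f) x| ^ p * v x = |a| ^ p * (|f x| ^ p * v x) := by
  rw [Pi.smul_apply, smul_eq_mul, abs_mul, Real.mul_rpow (abs_nonneg a) (abs_nonneg _), mul_assoc]

lemma MemLpW.const_smul {f : ℝ → ℝ} (hf : MemLpW p v f) (a : ℝ) :
    MemLpW p v (a • f) := by
  refine ⟨hf.1.const_smul a, ?_⟩
  simp_rw [abs_smul_rpow_mul a f]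
  exact hf.2.const_mul _

lemma lpNorm_const_smul (hp : 0 < p) (hv : ∀ x ∈ Ici (0:ℝ), 0 ≤ v x) (a : ℝ) (f : ℝ → ℝ) :
    lpNorm p v (a • f) = |a| * lpNorm p v f := by
  have hI : 0 ≤ ∫ x in Ici (0:ℝ), |f x| ^ p * v x :=
    setIntegral_nonneg measurableSet_Ici fun x hx => by have := hv x hx; positivity
  simp_rw [_root_.lpNorm, abs_smul_rpow_mul a f, integral_const_mul]
  rw [Real.mul_rpow (by positivity) hI, one_div, Real.rpow_rpow_inv (abs_nonneg a) hp.ne']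

end Weight

/-- The right shift by `s` on `[0,∞)`, padding `[0,s)` with zeros. Off `[0,∞)` it is `g (x - s)`
rather than `0`, so that `shiftRightW 0 g = g` holds exactly. -/
noncomputable def shiftRightW (s : ℝ) (g : ℝ → ℝ) : ℝ → ℝ :=
  (Ico 0 s)ᶜ.indicator (translateW (-s) g)

lemma shiftRightW_zero (g : ℝ → ℝ) : shiftRightW 0 g = g := by
  ext x; simp [shiftRightW, translateW]

lemma shiftRightW_eqOn_indicator (s : ℝ) (g : ℝ → ℝ) :
    EqOn (shiftRightW s g) ((Ici s).indicator (translateW (-s) g)) (Ici 0) := by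
  intro x hx
  by_cases hxs : s ≤ x
  · simp [shiftRightW, hxs]
  · have : x ∈ Ico 0 s := ⟨hx, not_le.1 hxs⟩
    simp [shiftRightW, hxs, this]

lemma translateW_shiftRightW_eqOn {t : ℝ} (ht : 0 ≤ t) (s : ℝ) (g : ℝ → ℝ) :
    EqOn (translateW t (shiftRightW s g)) (shiftRightW (s - t) g) (Ici 0) := by
  intro x (hx : 0 ≤ x)
  by_cases hxs : x + t < s
  · have h1 : x + t ∈ Ico 0 s := ⟨by linarith, hxs⟩
    have h2 : x ∈ Ico 0 (s - t) := ⟨hx, by linarith⟩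
    simp [translateW, shiftRightW, h1, h2]
  · have h1 : x + t ∉ Ico 0 s := fun h => hxs h.2
    have h2 : x ∉ Ico 0 (s - t) := fun h => hxs (by linarith [h.2])
    simp only [translateW, shiftRightW, indicator_of_mem (mem_compl h1),
      indicator_of_mem (mem_compl h2)]
    ring_nf

section ConstantWeight

variable {p c : ℝ}

lemma translateW_translateW (s t : ℝ) (f : ℝ → ℝ) :
    translateW t (translateW s f) = translateW (s + t) f := by
  ext x; simp only [translateW, add_comm s t, add_assoc]

lemma MemLpW.translateW {f : ℝ → ℝ} (hf : MemLpW p (fun _ => c) f) {s : ℝ} (hs : 0 ≤ s) :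
    MemLpW p (fun _ => c) (translateW s f) := by
  have hsub : Ici s ⊆ Ici (0:ℝ) := Ici_subset_Ici.2 hs
  exact ⟨(hf.1.mono_measure (Measure.restrict_mono hsub le_rfl)).comp_measurePreserving
      (measurePreserving_add_restrict_Ici (zero_add s)),
    (integrableOn_Ici_comp_add_iff (zero_add s)).2 (hf.2.mono_set hsub)⟩

lemma lpNorm_translateW (s : ℝ) (f : ℝ → ℝ) :
    lpNorm p (fun _ => c) (translateW s f) = (∫ x in Ici s, |f x| ^ p * c) ^ (1 / p) :=
  congrArg (· ^ (1 / p)) (setIntegral_Ici_comp_add (zero_add s) (fun y => |f y| ^ p * c))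

lemma tendsto_lpNorm_translateW_atTop (hp : 0 < p) (f : ℝ → ℝ) :
    Tendsto (fun s => lpNorm p (fun _ => c) (translateW s f)) atTop (𝓝 0) := by
  simp_rw [lpNorm_translateW]
  have hcont := Real.continuousAt_rpow_const 0 (1 / p) (Or.inr (by positivity))
  have hlim := hcont.tendsto.comp (tendsto_integral_Ici_zero (μ := volume)
    (f := fun x => |f x| ^ p * c) tendsto_id)
  rwa [Real.zero_rpow (by positivity)] at hlim

lemma abs_indicator_rpow_mul (hp : p ≠ 0) (s : Set ℝ) (g : ℝ → ℝ) :
    (fun x => |s.indicator g x| ^ p * c) = s.indicator (fun x => |g x| ^ p * c) :=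
  (indicator_comp_of_zero (g := fun y => |y| ^ p * c) (by simp [Real.zero_rpow hp])).symm

lemma MemLpW.shiftRightW (hp : p ≠ 0) {g : ℝ → ℝ} (hg : MemLpW p (fun _ => c) g) (s : ℝ) :
    MemLpW p (fun _ => c) (shiftRightW s g) := by
  refine MemLpW.congr ?_ (shiftRightW_eqOn_indicator s g).symm
  have hshift := measurePreserving_add_restrict_Ici (add_neg_cancel s)
  refine ⟨?_, ?_⟩
  · exact ((aestronglyMeasurable_indicator_iff measurableSet_Ici).2
      (hg.1.comp_measurePreserving hshift)).restrict
  · change IntegrableOn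
      (fun x => |(Ici s).indicator (_root_.translateW (-s) g) x| ^ p * c) (Ici 0)
    rw [abs_indicator_rpow_mul hp]
    exact (((integrableOn_Ici_comp_add_iff (add_neg_cancel s)).2 hg.2).integrable_indicator
      measurableSet_Ici).integrableOn

lemma lpNorm_shiftRightW (hp : p ≠ 0) {s : ℝ} (hs : 0 ≤ s) (g : ℝ → ℝ) :
    lpNorm p (fun _ => c) (shiftRightW s g) = lpNorm p (fun _ => c) g := by
  rw [lpNorm_congr (shiftRightW_eqOn_indicator s g), _root_.lpNorm, _root_.lpNorm,
    abs_indicator_rpow_mul hp, setIntegral_indicator measurableSet_Ici,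
    inter_eq_right.2 (Ici_subset_Ici.2 hs)]
  exact congrArg (· ^ (1 / p))
    (setIntegral_Ici_comp_add (add_neg_cancel s) (fun y => |g y| ^ p * c))

end ConstantWeight

def ExistsEpsChain (p : ℝ) (v : ℝ → ℝ) (t ε : ℝ) (f g : ℝ → ℝ) : Prop :=
  ∃ (n : ℕ) (F : ℕ → ℝ → ℝ), F 0 = f ∧ F n = g ∧
    (∀ i ≤ n, MemLpW p v (F i)) ∧
    ∀ i < n, lpNorm p v (translateW t (F i) - F (i + 1)) < ε

namespace ExistsEpsChain

variable {p t ε : ℝ} {v : ℝ → ℝ} {f g h : ℝ → ℝ}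

lemma of_lpNorm_lt (hf : MemLpW p v f) (hg : MemLpW p v g)
    (hfg : lpNorm p v (translateW t f - g) < ε) : ExistsEpsChain p v t ε f g := by
  refine ⟨1, fun i => if i = 0 then f else g, rfl, rfl, fun i _ => ?_, fun i hi => ?_⟩
  · dsimp only
    split_ifs
    exacts [hf, hg]
  · obtain rfl : i = 0 := Nat.lt_one_iff.1 hi
    exact hfg

lemma trans (hfg : ExistsEpsChain p v t ε f g) (hgh : ExistsEpsChain p v t ε g h) :
    ExistsEpsChain p v t ε f h := by
  obtain ⟨n, F, hF0, hFn, hFmem, hFlink⟩ := hfg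
  obtain ⟨m, G, hG0, hGm, hGmem, hGlink⟩ := hgh
  have hFG : F n = G 0 := hFn.trans hG0.symm
  refine ⟨n + m, fun i => if i ≤ n then F i else G (i - n), by simpa using hF0, ?_,
    fun i hi => ?_, fun i hi => ?_⟩
  · dsimp only
    split_ifs with h
    · obtain rfl : m = 0 := by omega
      simpa [hFG] using hGm
    · simpa using hGm
  · dsimp only
    split_ifs
    · exact hFmem i ‹_›
    · exact hGmem (i - n) (by omega)
  · dsimp only
    rcases lt_trichotomy i n with hin | rfl | hin
    · rw [if_pos hin.le, if_pos hin.nat_succ_le]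
      exact hFlink i hin
    · rw [if_pos le_rfl, if_neg (by omega), hFG, Nat.add_sub_cancel_left]
      exact hGlink 0 (by omega)
    · rw [if_neg (by omega), if_neg (by omega), Nat.sub_add_comm hin.le]
      exact hGlink (i - n) (by omega)

end ExistsEpsChain

section Chains

variable {p c t ε : ℝ} {f g : ℝ → ℝ}

lemma existsEpsChain_translateW_nat_mul (hp : p ≠ 0) (ht : 0 ≤ t) (hε : 0 < ε)
    (hf : MemLpW p (fun _ => c) f) (N : ℕ) :
    ExistsEpsChain p (fun _ => c) t ε f (translateW (N * t) f) := by
  refine ⟨N, fun i => translateW (i * t) f, by ext x; simp [translateW], rfl,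
    fun i _ => hf.translateW (by positivity), fun i _ => ?_⟩
  dsimp only
  rw [translateW_translateW, Nat.cast_succ, add_one_mul, sub_self, lpNorm_zero hp]
  exact hε

lemma existsEpsChain_zero_right (hp : 0 < p) (ht : 0 < t) (hε : 0 < ε)
    (hf : MemLpW p (fun _ => c) f) : ExistsEpsChain p (fun _ => c) t ε f 0 := by
  have hsmall : ∀ᶠ n : ℕ in atTop, lpNorm p (fun _ => c) (translateW (n * t) f) < ε :=
    ((tendsto_lpNorm_translateW_atTop hp f).comp
      (tendsto_natCast_atTop_atTop.atTop_mul_const ht)).eventually (gt_mem_nhds hε)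
  obtain ⟨N, hN⟩ := hsmall.exists_forall_of_atTop
  refine (existsEpsChain_translateW_nat_mul hp.ne' ht.le hε hf N).trans
    (.of_lpNorm_lt (hf.translateW (by positivity)) (memLpW_zero hp.ne') ?_)
  rw [sub_zero, translateW_translateW, ← add_one_mul]
  exact_mod_cast hN (N + 1) N.le_succ

lemma existsEpsChain_zero_left (hp : 0 < p) (hc : 0 ≤ c) (ht : 0 ≤ t) (hε : 0 < ε)
    (hg : MemLpW p (fun _ => c) g) : ExistsEpsChain p (fun _ => c) t ε 0 g := by
  have hg₀ : 0 ≤ lpNorm p (fun _ => c) g := lpNorm_nonneg (fun _ _ => hc) g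
  obtain ⟨m, hm⟩ := exists_nat_gt (lpNorm p (fun _ => c) g / ε)
  have hm₀ : (0 : ℝ) < m := (div_nonneg hg₀ hε.le).trans_lt hm
  refine ⟨m, fun j => ((j : ℝ) / m) • shiftRightW ((m - j) * t) g, by simp,
    by simp [shiftRightW_zero, hm₀.ne'], fun j _ => (hg.shiftRightW hp.ne' _).const_smul _,
    fun j hj => ?_⟩
  have hj' : (j : ℝ) + 1 ≤ m := by exact_mod_cast hj
  have hlink : EqOn (translateW t (((j : ℝ) / m) • shiftRightW ((m - j) * t) g)
        - (((j + 1 : ℕ) : ℝ) / m) • shiftRightW ((m - (j + 1 : ℕ)) * t) g)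
      ((-(1 / m : ℝ)) • shiftRightW ((m - (j + 1 : ℕ)) * t) g) (Ici 0) := by
    intro x hx
    have hshift := translateW_shiftRightW_eqOn ht ((m - j) * t) g hx
    simp only [translateW, Pi.sub_apply, Pi.smul_apply, smul_eq_mul] at hshift ⊢
    rw [hshift, Nat.cast_succ, show ((m : ℝ) - j) * t - t = (m - (j + 1)) * t by ring]
    field_simp
    ring
  rw [lpNorm_congr hlink, lpNorm_const_smul hp (fun _ _ => hc),
    lpNorm_shiftRightW hp.ne' (by push_cast; nlinarith), abs_neg, abs_of_pos (by positivity),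
    one_div_mul_eq_div, div_lt_iff₀ hm₀]
  rwa [div_lt_iff₀ hε, mul_comm] at hm

end Chains

theorem lp_constant_weight_chain_transitive
    (p : ℝ) (hp : 0 < p) (c : ℝ) (hc : 0 < c) (t : ℝ) (ht : 0 < t) :
    ∀ f g : ℝ → ℝ, MemLpW p (fun _ => c) f → MemLpW p (fun _ => c) g → ∀ ε > (0:ℝ),
      ∃ (n : ℕ) (F : ℕ → ℝ → ℝ), F 0 = f ∧ F n = g ∧
        (∀ i ≤ n, MemLpW p (fun _ => c) (F i)) ∧
        ∀ i < n, lpNorm p (fun _ => c) (translateW t (F i) - F (i + 1)) < ε := by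
  intro f g hf hg ε hε
  exact (existsEpsChain_zero_right hp ht hε hf).trans
    (existsEpsChain_zero_left hp hc.le ht.le hε hg)
end
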